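/- arXiv:2103.14499 — 5 statements merged into one kernel-verified Lean document; each statement's English description precedes it below -/
import Mathlib

section
/- Let V be a real Banach space and T : V → V a nonexpansive map with escape rate τ = lim_{n→∞} ‖Tⁿ0‖/n. Suppose h is a function on V that is a pointwise limit along a subsequence nᵢ of the functions x ↦ ‖x - T^{nᵢ}0‖ - ‖T^{nᵢ}0‖, and suppose moreover that ‖T^{nᵢ}0 - T^{nᵢ-1}0‖ → τ. Then h(Tx) ≤ h(x) + τ for all x ∈ V. -/
open Filter Topology

theorem limit_functional_subinvariant {V : Type*} [NormedAddCommGroup V]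
    [NormedSpace ℝ V] [CompleteSpace V] (T : V → V)
    (hT : ∀ x y : V, ‖T x - T y‖ ≤ ‖x - y‖) (τ : ℝ)
    (hτ : Tendsto (fun n : ℕ => ‖T^[n] 0‖ / n) atTop (𝓝 τ))
    (φ : ℕ → ℕ) (hφ : StrictMono φ) (h : V → ℝ)
    (hlim : ∀ x : V, Tendsto (fun i => ‖x - T^[φ i] 0‖ - ‖T^[φ i] 0‖) atTop (𝓝 (h x)))
    (hstep : Tendsto (fun i => ‖T^[φ i] 0 - T^[φ i - 1] 0‖) atTop (𝓝 τ)) :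
    ∀ x : V, h (T x) ≤ h x + τ := by
  intro x
  have key : ∀ᶠ i in atTop, ‖T x - T^[φ i] 0‖ - ‖T^[φ i] 0‖ ≤
      (‖x - T^[φ i] 0‖ - ‖T^[φ i] 0‖) + ‖T^[φ i] 0 - T^[φ i - 1] 0‖ := by
    filter_upwards [eventually_ge_atTop 1] with i hi
    have hge : 1 ≤ φ i := le_trans hi (hφ.le_apply)
    have hiter : T^[φ i] 0 = T (T^[φ i - 1] 0) := by
      conv_lhs => rw [← Nat.succ_pred_eq_of_pos hge]
      rw [Function.iterate_succ_apply']; rfl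
    have h1 : ‖T x - T^[φ i] 0‖ ≤ ‖x - T^[φ i - 1] 0‖ := by
      rw [hiter]; exact hT x _
    have h2 : ‖x - T^[φ i - 1] 0‖ ≤ ‖x - T^[φ i] 0‖ + ‖T^[φ i] 0 - T^[φ i - 1] 0‖ :=
      norm_sub_le_norm_sub_add_norm_sub x _ _
    linarith
  exact le_of_tendsto_of_tendsto (hlim (T x)) ((hlim x).add hstep) key
end

section
/- Let V be a real Banach space and T : V → V a firmly nonexpansive map with escape rate τ = 0, and suppose ‖T^{n+1}0 - Tⁿ0‖ → 0 as n → ∞. If h is a pointwise limit along a subsequence of the functions x ↦ ‖x - Tⁿ0‖ - ‖Tⁿ0‖, then h(Tx) ≤ h(x) for all x ∈ V. -/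
/-! Since `T` is nonexpansive, `‖T x - Tⁿ0‖ ≤ ‖x - Tⁿ0‖ + ‖Tⁿ⁺¹0 - Tⁿ0‖`; subtract `‖Tⁿ0‖`
and pass to the limit along the subsequence, where the step term vanishes. -/

open Filter Topology

theorem lipschitzWith_one_of_firmlyNonexpansive {V : Type*} [SeminormedAddCommGroup V]
    [Module ℝ V] {T : V → V}
    (hfirm : ∀ x y : V, ∀ t : ℝ, 0 ≤ t →
      ‖T x - T y‖ ≤ ‖(1 - t) • (T x - T y) + t • (x - y)‖) :
    LipschitzWith 1 T :=
  LipschitzWith.of_dist_le_mul fun x y => by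
    simpa [dist_eq_norm] using hfirm x y 1 zero_le_one

theorem LipschitzWith.dist_map_le_dist_add_dist_map_self {X : Type*} [PseudoMetricSpace X]
    {T : X → X} (hT : LipschitzWith 1 T) (x y : X) :
    dist (T x) y ≤ dist x y + dist (T y) y :=
  calc dist (T x) y ≤ dist (T x) (T y) + dist (T y) y := dist_triangle _ _ _
    _ ≤ dist x y + dist (T y) y := by
      gcongr
      simpa using hT.dist_le_mul x y

theorem firmly_nonexpansive_subinvariant_general {V : Type*} [NormedAddCommGroup V]
    [NormedSpace ℝ V] (T : V → V)
    (hfirm : ∀ x y : V, ∀ t : ℝ, 0 ≤ t →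
      ‖T x - T y‖ ≤ ‖(1 - t) • (T x - T y) + t • (x - y)‖)
    (hstep : Tendsto (fun n : ℕ => ‖T^[n + 1] 0 - T^[n] 0‖) atTop (𝓝 (0 : ℝ)))
    (φ : ℕ → ℕ) (hφ : StrictMono φ) (h : V → ℝ)
    (hlim : ∀ x : V, Tendsto (fun i => ‖x - T^[φ i] 0‖ - ‖T^[φ i] 0‖) atTop (𝓝 (h x))) :
    ∀ x : V, h (T x) ≤ h x := by
  intro x
  have hT := lipschitzWith_one_of_firmlyNonexpansive hfirm
  have hstepφ : Tendsto (fun i => ‖T (T^[φ i] 0) - T^[φ i] 0‖) atTop (𝓝 0) := by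
    simpa only [Function.iterate_succ_apply', Function.comp_def] using hstep.comp hφ.tendsto_atTop
  refine le_of_tendsto_of_tendsto' (hlim (T x)) (by simpa using (hlim x).add hstepφ) fun i => ?_
  have hdisp := hT.dist_map_le_dist_add_dist_map_self x (T^[φ i] 0)
  simp only [dist_eq_norm] at hdisp
  linarith

theorem firmly_nonexpansive_subinvariant {V : Type*} [NormedAddCommGroup V]
    [NormedSpace ℝ V] [CompleteSpace V] (T : V → V)
    (hfirm : ∀ x y : V, ∀ t : ℝ, 0 ≤ t →
      ‖T x - T y‖ ≤ ‖(1 - t) • (T x - T y) + t • (x - y)‖)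
    (hτ : Tendsto (fun n : ℕ => ‖T^[n] 0‖ / n) atTop (𝓝 (0 : ℝ)))
    (hstep : Tendsto (fun n : ℕ => ‖T^[n + 1] 0 - T^[n] 0‖) atTop (𝓝 (0 : ℝ)))
    (φ : ℕ → ℕ) (hφ : StrictMono φ) (h : V → ℝ)
    (hlim : ∀ x : V, Tendsto (fun i => ‖x - T^[φ i] 0‖ - ‖T^[φ i] 0‖) atTop (𝓝 (h x))) :
    ∀ x : V, h (T x) ≤ h x :=
  firmly_nonexpansive_subinvariant_general T hfirm hstep φ hφ h hlim
end

section
/- Let h : ℓ¹(ℤ) → ℝ be a metric functional of the form h(x) = Σ_{s∈I} ε_s x_s + Σ_{s∉I} (|x_s - z_s| - |z_s|) that takes a negative value somewhere, and let T : ℓ¹(ℤ) → ℓ¹(ℤ) satisfy h(Tx) ≤ h(x) for all x. If g is a continuous linear functional with g ≤ h pointwise, then g is not identically zero and f := -g satisfies f(Tⁿ0) ≥ 0 for all n ≥ 0. -/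
open Classical in
theorem l1_orbit_halfspace (I : Set ℤ) (ε : ℤ → ℝ) (z : ℤ → ℝ)
    (hε : ∀ s ∈ I, ε s = 1 ∨ ε s = -1)
    (h : lp (fun _ : ℤ => ℝ) 1 → ℝ)
    (hdef : ∀ x, h x = ∑' s : ℤ, if s ∈ I then ε s * x s else |x s - z s| - |z s|)
    (hneg : ∃ x, h x < 0)
    (T : lp (fun _ : ℤ => ℝ) 1 → lp (fun _ : ℤ => ℝ) 1)
    (hT : ∀ x, h (T x) ≤ h x)
    (g : lp (fun _ : ℤ => ℝ) 1 →L[ℝ] ℝ) (hg : ∀ x, g x ≤ h x) :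
    g ≠ 0 ∧ ∀ n : ℕ, 0 ≤ -g (T^[n] 0) := by
  have h0 : h 0 = 0 := by
    rw [hdef]
    have : ∀ s : ℤ, (if s ∈ I then ε s * (0 : lp (fun _ : ℤ => ℝ) 1) s
        else |(0 : lp (fun _ : ℤ => ℝ) 1) s - z s| - |z s|) = 0 := by
      intro s
      have hz : (0 : lp (fun _ : ℤ => ℝ) 1) s = 0 := rfl
      rw [hz]
      by_cases hs : s ∈ I <;> simp [hs, abs_sub_comm]
    simp only [this, tsum_zero]
  have horb : ∀ n : ℕ, h (T^[n] 0) ≤ 0 := by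
    intro n
    induction n with
    | zero => simp [h0]
    | succ k ih =>
      rw [Function.iterate_succ_apply']
      exact le_trans (hT _) ih
  constructor
  · intro hgz
    obtain ⟨x, hx⟩ := hneg
    have := hg x
    rw [hgz] at this
    simp at this
    linarith
  · intro n
    have := le_trans (hg _) (horb n)
    linarith
end

section
/- Let h : X → ℝ be a metric functional on a real Banach space X (a pointwise limit of functions h_y(x) = ‖x - y‖ - ‖y‖). Then there exists a continuous linear functional f on X with ‖f‖ ≤ 1 and f(x) ≤ h(x) for all x ∈ X. -/
/-!
As a pointwise limit of the convex 1-Lipschitz functions `x ↦ ‖x - y‖ - ‖y‖`, `h` is convex and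
continuous, with `h 0 = 0` and `h ≤ ‖·‖`. A subgradient of `h` at `0` is then a continuous linear
functional below `h`, and being below `‖·‖` bounds its norm by `1`.
-/

open Filter Topology

theorem ConvexOn.of_tendsto {E ι : Type*} [AddCommGroup E] [Module ℝ E] {s : Set E}
    {l : Filter ι} [l.NeBot] {F : ι → E → ℝ} {f : E → ℝ}
    (hF : ∀ᶠ i in l, ConvexOn ℝ s (F i))
    (hlim : ∀ x ∈ s, Tendsto (fun i => F i x) l (𝓝 (f x))) : ConvexOn ℝ s f := by
  obtain ⟨-, hs, -⟩ := hF.exists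
  refine ⟨hs, fun x hx z hz a b ha hb hab => ?_⟩
  refine le_of_tendsto_of_tendsto (hlim _ (hs hx hz ha hb hab))
    (((hlim x hx).const_mul a).add ((hlim z hz).const_mul b)) ?_
  filter_upwards [hF] with i hi using hi.2 hx hz ha hb hab

theorem ConvexOn.exists_subgradient_of_continuous {E : Type*} [TopologicalSpace E]
    [AddCommGroup E] [Module ℝ E] [IsTopologicalAddGroup E] [ContinuousSMul ℝ E] {f : E → ℝ}
    (hf : ConvexOn ℝ Set.univ f) (hc : Continuous f) (x₀ : E) :
    ∃ φ : StrongDual ℝ E, ∀ x, f x₀ + φ (x - x₀) ≤ f x := by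
  set S : Set (E × ℝ) := {p | p.1 ∈ Set.univ ∧ f p.1 < p.2}
  have hS : IsOpen S := by
    simpa [S] using isOpen_lt (hc.comp continuous_fst) continuous_snd
  -- Separate `(x₀, f x₀)` from the open strict epigraph, then read off the graph of `φ`
  -- from the separating hyperplane, which is not vertical.
  obtain ⟨Φ, hΦ⟩ := geometric_hahn_banach_open_point hf.convex_strict_epigraph hS
    (fun h => lt_irrefl _ h.2 : (x₀, f x₀) ∉ S)
  set c := Φ (0, 1)
  have hsep : ∀ x r, f x < r → Φ (x - x₀, 0) + (r - f x₀) * c < 0 := by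
    intro x r hr
    have hΦ_apply : Φ (x - x₀, r - f x₀) = Φ (x - x₀, 0) + (r - f x₀) * c := by
      rw [← smul_eq_mul, ← map_smul, ← map_add]
      simp
    rw [← hΦ_apply, ← Prod.mk_sub_mk, map_sub, sub_neg]
    exact hΦ (x, r) ⟨trivial, hr⟩
  have hc : c < 0 := by simpa [Prod.mk_zero_zero] using hsep x₀ (f x₀ + 1) (lt_add_one _)
  refine ⟨(-c⁻¹) • Φ.comp (ContinuousLinearMap.inl ℝ E ℝ),
    fun x => le_of_forall_gt fun r hr => ?_⟩
  have hdiv : -Φ (x - x₀, 0) / c < r - f x₀ := by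
    rw [div_lt_iff_of_neg hc]
    linarith [hsep x r hr]
  rw [neg_div, div_eq_inv_mul] at hdiv
  simp only [smul_apply, ContinuousLinearMap.comp_apply, ContinuousLinearMap.inl_apply,
    smul_eq_mul]
  linarith

theorem StrongDual.norm_le_of_le_mul_norm {E : Type*} [SeminormedAddCommGroup E]
    [NormedSpace ℝ E] (φ : StrongDual ℝ E) {C : ℝ} (hC : 0 ≤ C)
    (hφ : ∀ x, φ x ≤ C * ‖x‖) : ‖φ‖ ≤ C :=
  φ.opNorm_le_bound hC fun x => abs_le.2
    ⟨by simpa using neg_le_neg (hφ (-x)), hφ x⟩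

section normSubSubNorm

variable {E : Type*} [NormedAddCommGroup E]

theorem lipschitzWith_norm_sub_sub_norm (y : E) :
    LipschitzWith 1 fun x => ‖x - y‖ - ‖y‖ :=
  LipschitzWith.of_dist_le_mul fun x z => by
    simpa [Real.dist_eq, dist_eq_norm] using abs_norm_sub_norm_le (x - y) (z - y)

theorem convexOn_norm_sub_sub_norm [NormedSpace ℝ E] (y : E) :
    ConvexOn ℝ Set.univ fun x => ‖x - y‖ - ‖y‖ :=
  (convexOn_univ_norm.comp_affineMap (AffineMap.id ℝ E - AffineMap.const ℝ E y)).add_const _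

end normSubSubNorm

theorem linear_functional_below_metric_functional_general {X : Type*}
    [NormedAddCommGroup X] [NormedSpace ℝ X]
    {ι : Type*} (l : Filter ι) [l.NeBot] (y : ι → X) (h : X → ℝ)
    (hlim : ∀ x : X, Tendsto (fun i => ‖x - y i‖ - ‖y i‖) l (𝓝 (h x))) :
    ∃ f : X →L[ℝ] ℝ, ‖f‖ ≤ 1 ∧ ∀ x : X, f x ≤ h x := by
  have h_zero : h 0 = 0 := tendsto_nhds_unique (hlim 0) (by simp)
  have h_le_norm : ∀ x, h x ≤ ‖x‖ := fun x =>
    le_of_tendsto' (hlim x) fun i => by linarith [norm_sub_le x (y i)]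
  have h_convex : ConvexOn ℝ Set.univ h :=
    .of_tendsto (.of_forall fun i => convexOn_norm_sub_sub_norm (y i)) fun x _ => hlim x
  have h_lipschitz : LipschitzWith 1 h :=
    isClosed_setOfPred_lipschitzWith 1 |>.mem_of_tendsto (tendsto_pi_nhds.2 hlim)
      (.of_forall fun i => lipschitzWith_norm_sub_sub_norm (y i))
  obtain ⟨f, hf⟩ := h_convex.exists_subgradient_of_continuous h_lipschitz.continuous 0
  have hf_le : ∀ x, f x ≤ h x := fun x => by simpa [h_zero] using hf x
  refine ⟨f, f.norm_le_of_le_mul_norm zero_le_one fun x => ?_, hf_le⟩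
  simpa using (hf_le x).trans (h_le_norm x)

theorem linear_functional_below_metric_functional {X : Type*}
    [NormedAddCommGroup X] [NormedSpace ℝ X] [CompleteSpace X]
    {ι : Type*} (l : Filter ι) [l.NeBot] (y : ι → X) (h : X → ℝ)
    (hlim : ∀ x : X, Tendsto (fun i => ‖x - y i‖ - ‖y i‖) l (𝓝 (h x))) :
    ∃ f : X →L[ℝ] ℝ, ‖f‖ ≤ 1 ∧ ∀ x : X, f x ≤ h x :=
  linear_functional_below_metric_functional_general l y h hlim
end

section
/- For the map T : ℓ¹(ℕ) → ℓ¹(ℕ), T(x₁,x₂,...) = (1,x₁,x₂,...), one has Tⁿ0 = (1,1,...,1,0,0,...) (n ones), ‖Tⁿ0‖ = n, and for every x ∈ ℓ¹(ℕ), ‖x - Tⁿ0‖ - ‖Tⁿ0‖ → Σ_{s=1}^∞ (|x_s - 1| - 1) as n → ∞. -/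
open Filter Topology

/-!
The orbit point `Tⁿ0` is the indicator of `{0, …, n-1}`. Coordinatewise,
`‖x - y‖ - ‖y‖ = ∑ (|x s - y s| - |y s|)`, the summands are dominated by `|x s|` and converge,
once `n > s`, to `|x s - 1| - 1`; Tannery's theorem (dominated convergence for series) gives the
limit.
-/

namespace lp

variable {ι : Type*}

theorem summable_abs_of_one (f : lp (fun _ : ι => ℝ) 1) : Summable fun i => |f i| := by
  simpa using (lp.memℓp f).summable (by norm_num)

theorem norm_eq_tsum_abs_of_one (f : lp (fun _ : ι => ℝ) 1) : ‖f‖ = ∑' i, |f i| := by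
  simp [lp.norm_eq_tsum_rpow (by norm_num : (0 : ℝ) < (1 : ENNReal).toReal) f]

theorem norm_sub_sub_norm_eq_tsum (x y : lp (fun _ : ι => ℝ) 1) :
    ‖x - y‖ - ‖y‖ = ∑' i, (|x i - y i| - |y i|) := by
  rw [norm_eq_tsum_abs_of_one, norm_eq_tsum_abs_of_one,
    ← (summable_abs_of_one (x - y)).tsum_sub (summable_abs_of_one y)]
  rfl

end lp

theorem abs_abs_sub_sub_abs_le (a b : ℝ) : |(|a - b| - |b|)| ≤ |a| := by
  simpa [abs_neg] using abs_abs_sub_abs_le_abs_sub (a - b) (-b)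

theorem iterate_apply_zero_eq_ite {T : lp (fun _ : ℕ => ℝ) 1 → lp (fun _ : ℕ => ℝ) 1}
    (hT : ∀ (x : lp (fun _ : ℕ => ℝ) 1) (n : ℕ), T x n = if n = 0 then 1 else x (n - 1))
    (n i : ℕ) : (T^[n] 0) i = if i < n then (1 : ℝ) else 0 := by
  induction n generalizing i with
  | zero => simp
  | succ n ih =>
    rw [Function.iterate_succ_apply', hT]
    rcases i with _ | i
    · simp
    · simp [ih]

theorem norm_eq_of_apply_eq_ite (y : lp (fun _ : ℕ => ℝ) 1) (n : ℕ)
    (hy : ∀ i, y i = if i < n then (1 : ℝ) else 0) : ‖y‖ = n := by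
  rw [lp.norm_eq_tsum_abs_of_one, tsum_eq_sum (s := Finset.range n)]
  · rw [Finset.sum_congr rfl fun i hi => by rw [hy, if_pos (Finset.mem_range.1 hi), abs_one]]
    simp
  · intro i hi
    simp_all

theorem tendsto_norm_sub_sub_norm_of_apply_eq_ite (x : lp (fun _ : ℕ => ℝ) 1)
    (y : ℕ → lp (fun _ : ℕ => ℝ) 1) (hy : ∀ n i, y n i = if i < n then (1 : ℝ) else 0) :
    Tendsto (fun n => ‖x - y n‖ - ‖y n‖) atTop (𝓝 (∑' s, (|x s - 1| - 1))) := by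
  simp_rw [lp.norm_sub_sub_norm_eq_tsum]
  refine tendsto_tsum_of_dominated_convergence (lp.summable_abs_of_one x) (fun s => ?_)
    (.of_forall fun n s => abs_abs_sub_sub_abs_le _ _)
  refine tendsto_const_nhds.congr' ?_
  filter_upwards [eventually_gt_atTop s] with n hn
  simp [hy, hn]

theorem shift_orbit_metric_functional
    (T : lp (fun _ : ℕ => ℝ) 1 → lp (fun _ : ℕ => ℝ) 1)
    (hT : ∀ (x : lp (fun _ : ℕ => ℝ) 1) (n : ℕ),
      T x n = if n = 0 then 1 else x (n - 1)) :
    (∀ n i : ℕ, (T^[n] 0) i = if i < n then (1 : ℝ) else 0) ∧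
    (∀ n : ℕ, ‖T^[n] (0 : lp (fun _ : ℕ => ℝ) 1)‖ = n) ∧
    (∀ x : lp (fun _ : ℕ => ℝ) 1,
      Tendsto (fun n : ℕ => ‖x - T^[n] 0‖ - ‖T^[n] (0 : lp (fun _ : ℕ => ℝ) 1)‖)
        atTop (𝓝 (∑' s : ℕ, (|x s - 1| - 1)))) :=
  have horbit := iterate_apply_zero_eq_ite hT
  ⟨horbit, fun n => norm_eq_of_apply_eq_ite _ n (horbit n),
    fun x => tendsto_norm_sub_sub_norm_of_apply_eq_ite x _ horbit⟩
end
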